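/- First-order Chern connection identity. Fix real M, a. On the open set of ℝ⁴ (coordinates (t, r, q, φ)) where C(r) ≠ 0, D(q) ≠ 0, ρ² ≠ 0 and r + iaq ≠ 0, let α be the Chern connection 1-form. Then for every smooth complex-valued function F: 2i [ −(1/C) α(X) · (XF) + (1/D) α(Y) · (YF) ] = (C_r/C) · XF + i (D_q/D) · YF − 4 (r − iaq) ∂_t F pointwise. -/
import Mathlib


open Complex

noncomputable section

namespace ChernConnectionIdentity

/-- Points of `ℝ⁴` in coordinates `(t, r, q, φ)`. -/
abbrev Pt := Fin 4 → ℝ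

/-- Partial derivative in the `μ`-th coordinate direction. -/
def pd (μ : Fin 4) (F : Pt → ℂ) (x : Pt) : ℂ := fderiv ℝ F x (Pi.single μ 1)

def Cf (M a : ℝ) (x : Pt) : ℝ := (x 1) ^ 2 - 2 * M * (x 1) + a ^ 2
def Df (x : Pt) : ℝ := 1 - (x 2) ^ 2
def rho2 (a : ℝ) (x : Pt) : ℝ := (x 1) ^ 2 + a ^ 2 * (x 2) ^ 2
def lamP (a : ℝ) (x : Pt) : ℂ := 1 / (((x 1 : ℝ) : ℂ) + Complex.I * (a : ℂ) * ((x 2 : ℝ) : ℂ))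

/-- `XF = (r² + a²)∂_t F + a ∂_φ F`. -/
def Xop (a : ℝ) (F : Pt → ℂ) (x : Pt) : ℂ :=
  (((x 1) ^ 2 + a ^ 2 : ℝ) : ℂ) * pd 0 F x + (a : ℂ) * pd 3 F x
/-- `YF = a(1 − q²)∂_t F + ∂_φ F`. -/
def Yop (a : ℝ) (F : Pt → ℂ) (x : Pt) : ℂ :=
  ((a * (1 - (x 2) ^ 2) : ℝ) : ℂ) * pd 0 F x + pd 3 F x

/-- The 1-form `A = dt − a(1 − q²)dφ`. -/
def formA (a : ℝ) (x : Pt) : Fin 4 → ℂ :=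
  ![1, 0, 0, ((-(a * (1 - (x 2) ^ 2)) : ℝ) : ℂ)]
/-- The 1-form `B = a dt − (r² + a²)dφ`. -/
def formB (a : ℝ) (x : Pt) : Fin 4 → ℂ :=
  ![(a : ℂ), 0, 0, ((-((x 1) ^ 2 + a ^ 2) : ℝ) : ℂ)]

/-- The Chern connection 1-form
`α = i(C/ρ²)(C_r/(2C) − 2λ₊) A − (D/ρ²)(D_q/(2D) − 2iaλ₊) B`. -/
def alpha (M a : ℝ) (x : Pt) : Fin 4 → ℂ := fun μ =>
  Complex.I * ((Cf M a x : ℝ) : ℂ) / ((rho2 a x : ℝ) : ℂ) *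
      (((2 * ((x 1) - M) : ℝ) : ℂ) / (2 * ((Cf M a x : ℝ) : ℂ)) - 2 * lamP a x) *
      formA a x μ
    - (((Df x : ℝ) : ℂ) / ((rho2 a x : ℝ) : ℂ)) *
      (((-2 * (x 2) : ℝ) : ℂ) / (2 * ((Df x : ℝ) : ℂ)) - 2 * Complex.I * (a : ℂ) * lamP a x) *
      formB a x μ

/-- `u(X) = (r² + a²)u_t + a u_φ` for a 1-form `u`. -/
def evalX (a : ℝ) (u : Fin 4 → ℂ) (x : Pt) : ℂ :=
  (((x 1) ^ 2 + a ^ 2 : ℝ) : ℂ) * u 0 + (a : ℂ) * u 3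
/-- `u(Y) = a(1 − q²)u_t + u_φ` for a 1-form `u`. -/
def evalY (a : ℝ) (u : Fin 4 → ℂ) (x : Pt) : ℂ :=
  ((a * (1 - (x 2) ^ 2) : ℝ) : ℂ) * u 0 + u 3

/-- First-order Chern connection identity:
`2i[−(1/C) α(X)·XF + (1/D) α(Y)·YF] = (C_r/C) XF + i(D_q/D) YF − 4(r − iaq) ∂_t F`. -/
theorem chern_connection_first_order (M a : ℝ)
    (F : Pt → ℂ)
    (hF : ContDiffOn ℝ (⊤ : ℕ∞) F {x : Pt | Cf M a x ≠ 0 ∧ Df x ≠ 0 ∧ rho2 a x ≠ 0 ∧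
      ((x 1 : ℝ) : ℂ) + Complex.I * (a : ℂ) * ((x 2 : ℝ) : ℂ) ≠ 0}) :
    ∀ x : Pt, Cf M a x ≠ 0 → Df x ≠ 0 → rho2 a x ≠ 0 →
      ((x 1 : ℝ) : ℂ) + Complex.I * (a : ℂ) * ((x 2 : ℝ) : ℂ) ≠ 0 →
      2 * Complex.I * (-(1 / ((Cf M a x : ℝ) : ℂ)) * evalX a (alpha M a x) x * Xop a F x
          + (1 / ((Df x : ℝ) : ℂ)) * evalY a (alpha M a x) x * Yop a F x)
      = ((2 * ((x 1) - M) / Cf M a x : ℝ) : ℂ) * Xop a F x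
        + Complex.I * ((-2 * (x 2) / Df x : ℝ) : ℂ) * Yop a F x
        - 4 * (((x 1 : ℝ) : ℂ) - Complex.I * (a : ℂ) * ((x 2 : ℝ) : ℂ)) * pd 0 F x := by
  intro x hC hD hrho hq
  have hC' : ((Cf M a x : ℝ) : ℂ) ≠ 0 := Complex.ofReal_ne_zero.mpr hC
  have hD' : ((Df x : ℝ) : ℂ) ≠ 0 := Complex.ofReal_ne_zero.mpr hD
  have hr' : ((rho2 a x : ℝ) : ℂ) ≠ 0 := Complex.ofReal_ne_zero.mpr hrho
  have hR1 : (((Cf M a x : ℝ) : ℂ))⁻¹ * ((Cf M a x : ℝ) : ℂ) = 1 := inv_mul_cancel₀ hC'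
  have hR1d : (((Df x : ℝ) : ℂ))⁻¹ * ((Df x : ℝ) : ℂ) = 1 := inv_mul_cancel₀ hD'
  have hR2 : (((rho2 a x : ℝ) : ℂ))⁻¹ * ((rho2 a x : ℝ) : ℂ) = 1 := inv_mul_cancel₀ hr'
  have hR4 : ((rho2 a x : ℝ) : ℂ)
      = ((x 1 : ℝ) : ℂ) ^ 2 + (a : ℂ) ^ 2 * ((x 2 : ℝ) : ℂ) ^ 2 := by
    rw [rho2]; push_cast; ring
  have hkey : lamP a x * ((rho2 a x : ℝ) : ℂ)
      = ((x 1 : ℝ) : ℂ) - Complex.I * (a : ℂ) * ((x 2 : ℝ) : ℂ) := by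
    rw [lamP, rho2]
    field_simp
    push_cast
    linear_combination ((a : ℂ) ^ 2 * ((x 2 : ℝ) : ℂ) ^ 2) * Complex.I_sq
  have hXY : Xop a F x - (a : ℂ) * Yop a F x = ((rho2 a x : ℝ) : ℂ) * pd 0 F x := by
    rw [Xop, Yop, rho2]
    push_cast
    ring
  have e1 : -(1 / ((Cf M a x : ℝ) : ℂ)) * evalX a (alpha M a x) x
      = -(Complex.I * (((x 1 : ℝ) : ℂ) - (M : ℂ)) / ((Cf M a x : ℝ) : ℂ))
        + 2 * Complex.I * lamP a x := by
    simp only [evalX, alpha, formA, formB, Matrix.cons_val_zero, Matrix.cons_val_one,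
      Matrix.head_cons, Matrix.cons_val_two, Matrix.tail_cons, Matrix.cons_val_three,
      Matrix.cons_val_fin_one]
    push_cast
    linear_combination
      ((((Cf M a x : ℝ) : ℂ))⁻¹ * (Complex.I * ((Cf M a x : ℝ) : ℂ)
          * (((rho2 a x : ℝ) : ℂ))⁻¹
          * ((((x 1 : ℝ) : ℂ) - (M : ℂ)) * (((Cf M a x : ℝ) : ℂ))⁻¹ - 2 * lamP a x))) * hR4
      + (-(((Cf M a x : ℝ) : ℂ))⁻¹ * Complex.I * ((Cf M a x : ℝ) : ℂ)
          * ((((x 1 : ℝ) : ℂ) - (M : ℂ)) * (((Cf M a x : ℝ) : ℂ))⁻¹ - 2 * lamP a x)) * hR2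
      + (-Complex.I * ((((x 1 : ℝ) : ℂ) - (M : ℂ)) * (((Cf M a x : ℝ) : ℂ))⁻¹
          - 2 * lamP a x)) * hR1
  have e2 : 1 / ((Df x : ℝ) : ℂ) * evalY a (alpha M a x) x
      = -(((x 2 : ℝ) : ℂ) / ((Df x : ℝ) : ℂ)) - 2 * Complex.I * (a : ℂ) * lamP a x := by
    simp only [evalY, alpha, formA, formB, Matrix.cons_val_zero, Matrix.cons_val_one,
      Matrix.head_cons, Matrix.cons_val_two, Matrix.tail_cons, Matrix.cons_val_three,
      Matrix.cons_val_fin_one]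
    push_cast
    linear_combination
      (-(((Df x : ℝ) : ℂ))⁻¹ * (((Df x : ℝ) : ℂ) * (((rho2 a x : ℝ) : ℂ))⁻¹
          * (-(((x 2 : ℝ) : ℂ) * (((Df x : ℝ) : ℂ))⁻¹)
            - 2 * Complex.I * (a : ℂ) * lamP a x))) * hR4
      + ((((Df x : ℝ) : ℂ))⁻¹ * ((Df x : ℝ) : ℂ)
          * (-(((x 2 : ℝ) : ℂ) * (((Df x : ℝ) : ℂ))⁻¹)
            - 2 * Complex.I * (a : ℂ) * lamP a x)) * hR2
      + (-(((x 2 : ℝ) : ℂ) * (((Df x : ℝ) : ℂ))⁻¹)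
          - 2 * Complex.I * (a : ℂ) * lamP a x) * hR1d
  rw [e1, e2]
  push_cast
  linear_combination (4 * Complex.I ^ 2 * lamP a x) * hXY + (-4 * pd 0 F x) * hkey
    + (4 * lamP a x * ((rho2 a x : ℝ) : ℂ) * pd 0 F x
        - 2 * (((x 1 : ℝ) : ℂ) - (M : ℂ)) / ((Cf M a x : ℝ) : ℂ) * Xop a F x) * Complex.I_sq

end ChernConnectionIdentity
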